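/- Fix h ∈ (0, 1] and κ > 0, and define f_hard: ℝ^d → ℝ by f_hard(x) = ∑_{i∈[d]} f_i(x_i), where f₁(c) = (1/2)c² and f_i(c) = (κ/3)c² − (κh/3)cos(c/√h) for 2 ≤ i ≤ d. Fix x ∈ ℝ^d such that for every 2 ≤ i ≤ d there is an integer k_i with −(1/2)π√h + 2πk_i√h ≤ x_i ≤ (1/2)π√h + 2πk_i√h. For g ∼ N(0, I_d), set x_g := x + √(2h)·g and define S_i^x := −f_i([x_g]_i) + f_i(x_i) − (1/2)(x_i − [x_g]_i)(f_i'(x_i) + f_i'([x_g]_i)). Then E_g[S₁^x] = 0, and for each 2 ≤ i ≤ d, E_g[S_i^x] ≤ −0.08·h·κ·cos(x_i/√h). -/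

import Mathlib

open MeasureTheory

noncomputable section

/-- The standard Gaussian `N(0, I_d)` on `Fin d → ℝ`. -/
def stdGaussianPi (d : ℕ) : Measure (Fin d → ℝ) :=
  Measure.pi fun _ : Fin d => ProbabilityTheory.gaussianReal 0 1

/-- The coordinate functions of the hard distribution: `f₁(c) = c²/2` and
`fᵢ(c) = (κ/3)c² − (κh/3)cos(c/√h)` for `i ≠ 1`. -/
def fhard1d {d : ℕ} [NeZero d] (κ h : ℝ) (i : Fin d) : ℝ → ℝ :=
  fun c => if i = 0 then (1 / 2) * c ^ 2
    else (κ / 3) * c ^ 2 - (κ * h / 3) * Real.cos (c / Real.sqrt h)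

/-- The per-coordinate log-acceptance random variable `Sᵢˣ`, as a function of `g`. -/
def Svar {d : ℕ} [NeZero d] (κ h : ℝ) (x : Fin d → ℝ) (i : Fin d) (g : Fin d → ℝ) : ℝ :=
  -fhard1d κ h i (x i + Real.sqrt (2 * h) * g i) + fhard1d κ h i (x i) -
    (1 / 2) * (x i - (x i + Real.sqrt (2 * h) * g i)) *
      (deriv (fhard1d κ h i) (x i) + deriv (fhard1d κ h i) (x i + Real.sqrt (2 * h) * g i))

section auxlemmas
open Real Filter

lemma aux_integral_cos (a b : ℝ) :
    ∫ x : ℝ, Real.cos (a + b * x) * Real.exp (-x ^ 2 / 2)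
      = Real.sqrt (2 * π) * Real.exp (-b ^ 2 / 2) * Real.cos a := by
  have key := integral_cexp_quadratic (b := -(1/2 : ℂ)) (by norm_num) (b * Complex.I) (a * Complex.I)
  have hint : Integrable (fun x : ℝ =>
      Complex.exp (-(1/2 : ℂ) * x ^ 2 + (b * Complex.I) * x + a * Complex.I)) := by
    simpa using integrable_cexp_quadratic (b := (1/2 : ℂ)) (by norm_num) (b * Complex.I) (a * Complex.I)
  have hre := integral_re (𝕜 := ℂ) hint
  simp only [RCLike.re_to_complex] at hre
  have h1 : (fun x : ℝ => Real.cos (a + b * x) * Real.exp (-x ^ 2 / 2))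
      = fun x : ℝ => (Complex.exp (-(1/2 : ℂ) * x ^ 2 + (b * Complex.I) * x + a * Complex.I)).re := by
    funext x
    rw [Complex.exp_re]
    have e1 : (-(1/2 : ℂ) * x ^ 2 + (b * Complex.I) * x + a * Complex.I).re = -x^2/2 := by
      simp [← Complex.ofReal_pow]; ring
    have e2 : (-(1/2 : ℂ) * x ^ 2 + (b * Complex.I) * x + a * Complex.I).im = a + b*x := by
      simp [← Complex.ofReal_pow]; ring
    rw [e1, e2]; ring
  rw [h1, hre, key]
  have e3 : ((π : ℂ) / -(-(1/2 : ℂ))) = ((2 * π : ℝ) : ℂ) := by push_cast; ring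
  have e4 : ((a : ℂ) * Complex.I - (b * Complex.I)^2 / (4 * -(1/2 : ℂ)))
      = ((-b^2/2 : ℝ) : ℂ) + (a : ℝ) * Complex.I := by
    rw [mul_pow, Complex.I_sq]; push_cast; ring
  have e5 : ((2*π:ℝ):ℂ) ^ (1/2 : ℂ) = ((Real.sqrt (2*π) : ℝ) : ℂ) := by
    rw [show (1/2:ℂ) = ((1/2:ℝ):ℂ) by norm_num,
      ← Complex.ofReal_cpow (by positivity : (0:ℝ) ≤ 2*π), Real.sqrt_eq_rpow]

  rw [e3, e4, e5, Complex.re_ofReal_mul, Complex.exp_re]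
  simp [← Complex.ofReal_pow]
  ring


lemma aux_integral_deriv_zero {F F' : ℝ → ℝ} (hd : ∀ x, HasDerivAt F (F' x) x)
    (hi : Integrable F') (htop : Tendsto F atTop (nhds 0)) (hbot : Tendsto F atBot (nhds 0)) :
    ∫ x, F' x = 0 := by
  rw [← intervalIntegral.integral_Iic_add_Ioi (b := 0) hi.integrableOn hi.integrableOn,
    integral_Iic_of_hasDerivAt_of_tendsto' (fun x _ => hd x) hi.integrableOn hbot,
    integral_Ioi_of_hasDerivAt_of_tendsto' (fun x _ => hd x) hi.integrableOn htop]
  ring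

lemma aux_tendsto_top : Tendsto (fun x : ℝ => Real.exp (-x^2/2)) atTop (nhds 0) := by
  apply Real.tendsto_exp_atBot.comp
  apply Tendsto.atBot_div_const (by norm_num : (0:ℝ) < 2)
  exact tendsto_neg_atBot_iff.mpr (tendsto_pow_atTop (by norm_num : 2 ≠ 0))

lemma aux_tendsto_bot : Tendsto (fun x : ℝ => Real.exp (-x^2/2)) atBot (nhds 0) := by
  apply Real.tendsto_exp_atBot.comp
  apply Tendsto.atBot_div_const (by norm_num : (0:ℝ) < 2)
  apply tendsto_neg_atBot_iff.mpr
  have h1 : Tendsto (fun x : ℝ => |x|) atBot atTop := tendsto_abs_atBot_atTop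
  have h2 : Tendsto (fun x : ℝ => x ^ 2) atBot atTop := by
    have := (tendsto_pow_atTop (α := ℝ) (n := 2) (by norm_num)).comp h1
    simpa [Function.comp_def, sq_abs] using this
  exact h2


lemma aux_integrable_cos (a b : ℝ) :
    Integrable (fun x : ℝ => Real.cos (a + b * x) * Real.exp (-x ^ 2 / 2)) := by
  refine (integrable_exp_neg_mul_sq (by norm_num : (0:ℝ) < 1/2)).mono'
    (Continuous.aestronglyMeasurable (by continuity)) ?_
  filter_upwards with x
  have h1 : Real.exp (-(1/2 : ℝ) * x ^ 2) = Real.exp (-x ^ 2 / 2) := by ring_nf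
  rw [h1, norm_mul, Real.norm_eq_abs, Real.norm_eq_abs, Real.abs_exp]
  calc |Real.cos (a + b*x)| * Real.exp (-x^2/2) ≤ 1 * Real.exp (-x^2/2) :=
        mul_le_mul_of_nonneg_right (Real.abs_cos_le_one _) (Real.exp_pos _).le
    _ = Real.exp (-x^2/2) := one_mul _

lemma aux_integrable_xsin (a b : ℝ) :
    Integrable (fun x : ℝ => x * Real.sin (a + b * x) * Real.exp (-x ^ 2 / 2)) := by
  refine ((integrable_mul_exp_neg_mul_sq (by norm_num : (0:ℝ) < 1/2)).abs).mono'
    (Continuous.aestronglyMeasurable (by continuity)) ?_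
  filter_upwards with x
  have h1 : |x * Real.exp (-(1/2 : ℝ) * x ^ 2)| = |x| * Real.exp (-x ^ 2 / 2) := by
    rw [abs_mul, Real.abs_exp]; ring_nf
  rw [h1, norm_mul, norm_mul, Real.norm_eq_abs, Real.norm_eq_abs, Real.norm_eq_abs, Real.abs_exp]
  have h2 : |x| * |Real.sin (a + b*x)| ≤ |x| * 1 :=
    mul_le_mul_of_nonneg_left (Real.abs_sin_le_one _) (abs_nonneg _)
  calc |x| * |Real.sin (a + b*x)| * Real.exp (-x^2/2) ≤ |x| * 1 * Real.exp (-x^2/2) :=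
        mul_le_mul_of_nonneg_right h2 (Real.exp_pos _).le
    _ = |x| * Real.exp (-x^2/2) := by ring

lemma aux_integral_xsin (a b : ℝ) :
    ∫ x : ℝ, x * Real.sin (a + b * x) * Real.exp (-x ^ 2 / 2)
      = b * (Real.sqrt (2 * π) * Real.exp (-b ^ 2 / 2) * Real.cos a) := by
  set F : ℝ → ℝ := fun x => -(Real.exp (-x^2/2) * Real.sin (a + b*x)) with hF
  have hd : ∀ x : ℝ, HasDerivAt F
      (x * Real.sin (a+b*x) * Real.exp (-x^2/2) - b * (Real.cos (a+b*x) * Real.exp (-x^2/2))) x := by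
    intro x
    have h1 : HasDerivAt (fun x : ℝ => -x^2/2) (-x) x := by
      have : HasDerivAt (fun x : ℝ => -x^2/2) _ x := ((hasDerivAt_pow 2 x).neg.div_const 2)
      convert this using 1; ring
    have h2 : HasDerivAt (fun x : ℝ => Real.exp (-x^2/2)) (Real.exp (-x^2/2) * (-x)) x := h1.exp
    have h3 : HasDerivAt (fun x : ℝ => a + b*x) b x := by
      simpa using ((hasDerivAt_id x).const_mul b).const_add a
    have h4 : HasDerivAt (fun x : ℝ => Real.sin (a + b*x)) (Real.cos (a+b*x) * b) x := by
      simpa using h3.sin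
    have h5 : HasDerivAt F _ x := (h2.mul h4).neg
    convert h5 using 1
    ring
  have hi : Integrable (fun x : ℝ =>
      x * Real.sin (a+b*x) * Real.exp (-x^2/2) - b * (Real.cos (a+b*x) * Real.exp (-x^2/2))) :=
    (aux_integrable_xsin a b).sub ((aux_integrable_cos a b).const_mul b)
  have hbound : ∀ x : ℝ, ‖F x‖ ≤ Real.exp (-x^2/2) := by
    intro x
    rw [hF, norm_neg, norm_mul, Real.norm_eq_abs, Real.norm_eq_abs, Real.abs_exp]
    calc Real.exp (-x^2/2) * |Real.sin (a + b*x)| ≤ Real.exp (-x^2/2) * 1 :=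
          mul_le_mul_of_nonneg_left (Real.abs_sin_le_one _) (Real.exp_pos _).le
      _ = Real.exp (-x^2/2) := mul_one _
  have h0 := aux_integral_deriv_zero hd hi
    (squeeze_zero_norm hbound aux_tendsto_top) (squeeze_zero_norm hbound aux_tendsto_bot)
  rw [integral_sub (aux_integrable_xsin a b) ((aux_integrable_cos a b).const_mul b),
    sub_eq_zero] at h0
  rw [h0, MeasureTheory.integral_const_mul, aux_integral_cos]

lemma aux_integral_x : ∫ x : ℝ, x * Real.exp (-x ^ 2 / 2) = 0 := by
  have := aux_integral_xsin (π/2) 0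
  simpa using this

lemma aux_integral_exp : ∫ x : ℝ, Real.exp (-x ^ 2 / 2) = Real.sqrt (2 * π) := by
  have := aux_integral_cos 0 0
  simpa using this

lemma aux_integral_gauss (F : ℝ → ℝ) (hF : Measurable F) :
    ∫ y, F y ∂(ProbabilityTheory.gaussianReal 0 1)
      = (Real.sqrt (2 * π))⁻¹ * ∫ x, F x * Real.exp (-x ^ 2 / 2) := by
  rw [ProbabilityTheory.gaussianReal_of_var_ne_zero 0 one_ne_zero]
  have h1 : (ProbabilityTheory.gaussianPDF 0 1)
      = fun x => ((Real.toNNReal (ProbabilityTheory.gaussianPDFReal 0 1 x) : NNReal) : ENNReal) :=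
    rfl
  rw [h1, integral_withDensity_eq_integral_smul
    ((ProbabilityTheory.measurable_gaussianPDFReal 0 1).real_toNNReal) F]
  rw [← MeasureTheory.integral_const_mul]
  congr 1
  funext x
  rw [NNReal.smul_def, smul_eq_mul, Real.coe_toNNReal _ (ProbabilityTheory.gaussianPDFReal_nonneg 0 1 x)]
  rw [ProbabilityTheory.gaussianPDFReal]
  push_cast
  ring_nf


lemma aux_map_eval (d : ℕ) [NeZero d] (i : Fin d) :
    (stdGaussianPi d).map (fun g => g i) = ProbabilityTheory.gaussianReal 0 1 := by
  refine Measure.ext fun s hs => ?_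
  rw [Measure.map_apply (measurable_pi_apply i) hs, stdGaussianPi]
  have h1 : (fun g : Fin d → ℝ => g i) ⁻¹' s
      = Set.pi Set.univ (Function.update (fun _ : Fin d => Set.univ) i s) := Set.eval_preimage
  rw [h1, Measure.pi_pi]
  rw [Finset.prod_eq_single i (fun j _ hj => by simp [Function.update_of_ne hj]) (by simp)]
  simp

lemma aux_integral_eval (d : ℕ) [NeZero d] (i : Fin d) (F : ℝ → ℝ)
    (hF : AEStronglyMeasurable F (ProbabilityTheory.gaussianReal 0 1)) :
    ∫ g, F (g i) ∂(stdGaussianPi d) = ∫ y, F y ∂(ProbabilityTheory.gaussianReal 0 1) := by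
  rw [← aux_map_eval d i, integral_map (measurable_pi_apply i).aemeasurable
    (by rw [aux_map_eval]; exact hF)]


lemma aux_deriv1 {d : ℕ} [NeZero d] (κ h : ℝ) (c : ℝ) :
    deriv (fhard1d (d := d) κ h 0) c = c := by
  have heq : fhard1d (d := d) κ h 0 = fun c : ℝ => (1/2 : ℝ) * c ^ 2 :=
    funext fun c => if_pos rfl
  rw [heq]
  have h1 : HasDerivAt (fun c : ℝ => (1/2 : ℝ) * c ^ 2) ((1/2 : ℝ) * (2 * c ^ 1)) c := by
    simpa using (hasDerivAt_pow 2 c).const_mul (1/2 : ℝ)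
  rw [h1.deriv]; ring

lemma aux_deriv2 {d : ℕ} [NeZero d] (κ h : ℝ) (hh0 : 0 < h) (i : Fin d) (hi : i ≠ 0) (c : ℝ) :
    deriv (fhard1d (d := d) κ h i) c
      = 2 * κ / 3 * c + κ * Real.sqrt h / 3 * Real.sin (c / Real.sqrt h) := by
  have hs0 : Real.sqrt h ≠ 0 := ne_of_gt (Real.sqrt_pos.mpr hh0)
  have heq : fhard1d (d := d) κ h i
      = fun c : ℝ => (κ/3) * c ^ 2 - (κ * h / 3) * Real.cos (c / Real.sqrt h) :=
    funext fun c => if_neg hi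
  rw [heq]
  have h1 : HasDerivAt (fun c : ℝ => (κ/3 : ℝ) * c ^ 2) (κ/3 * (2 * c ^ 1)) c := by
    simpa using (hasDerivAt_pow 2 c).const_mul (κ/3 : ℝ)
  have h2 : HasDerivAt (fun c : ℝ => c / Real.sqrt h) (1 / Real.sqrt h) c := by
    simpa using (hasDerivAt_id c).div_const (Real.sqrt h)
  have h3 : HasDerivAt (fun c : ℝ => Real.cos (c / Real.sqrt h))
      (-Real.sin (c / Real.sqrt h) * (1 / Real.sqrt h)) c := h2.cos
  have h4 : HasDerivAt (fun c : ℝ => (κ/3) * c ^ 2 - (κ * h / 3) * Real.cos (c / Real.sqrt h)) _ c :=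
    h1.sub (h3.const_mul (κ * h / 3))
  rw [h4.deriv]
  have hss : Real.sqrt h * Real.sqrt h = h := Real.mul_self_sqrt hh0.le
  field_simp
  linear_combination (-κ * Real.sin (c / Real.sqrt h)) * hss

lemma aux_Svar_zero {d : ℕ} [NeZero d] (κ h : ℝ) (x g : Fin d → ℝ) :
    Svar κ h x 0 g = 0 := by
  have hf : fhard1d (d := d) κ h 0 = fun c : ℝ => (1/2 : ℝ) * c ^ 2 :=
    funext fun c => if_pos rfl
  simp only [Svar, aux_deriv1]
  simp only [hf]
  ring

lemma aux_Svar_eq {d : ℕ} [NeZero d] (κ h : ℝ) (hh0 : 0 < h) (x : Fin d → ℝ) (i : Fin d)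
    (hi : i ≠ 0) (g : Fin d → ℝ) :
    Svar κ h x i g = κ * h / 3 *
      (Real.cos (x i / Real.sqrt h + Real.sqrt 2 * g i) - Real.cos (x i / Real.sqrt h)
        + Real.sqrt 2 / 2 * g i *
          (Real.sin (x i / Real.sqrt h) + Real.sin (x i / Real.sqrt h + Real.sqrt 2 * g i))) := by
  have hs0 : Real.sqrt h ≠ 0 := ne_of_gt (Real.sqrt_pos.mpr hh0)
  have h2h : Real.sqrt (2 * h) = Real.sqrt 2 * Real.sqrt h := Real.sqrt_mul (by norm_num) h
  have harg : (x i + Real.sqrt (2 * h) * g i) / Real.sqrt h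
      = x i / Real.sqrt h + Real.sqrt 2 * g i := by
    rw [h2h]; field_simp
  simp only [Svar, aux_deriv2 κ h hh0 i hi, fhard1d, if_neg hi]
  rw [harg, h2h]
  have hss : Real.sqrt h * Real.sqrt h = h := Real.mul_self_sqrt hh0.le
  linear_combination (κ * Real.sqrt 2 * g i / 6 *
    (Real.sin (x i / Real.sqrt h) + Real.sin (x i / Real.sqrt h + Real.sqrt 2 * g i))) * hss

end auxlemmas

theorem hard_one_dim_expectation (d : ℕ) [NeZero d] (κ h : ℝ) (hκ : 0 < κ)
    (hh0 : 0 < h) (hh1 : h ≤ 1) (x : Fin d → ℝ)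
    (hx : ∀ i : Fin d, i ≠ 0 → ∃ k : ℤ,
      -(1 / 2) * Real.pi * Real.sqrt h + 2 * Real.pi * k * Real.sqrt h ≤ x i ∧
        x i ≤ (1 / 2) * Real.pi * Real.sqrt h + 2 * Real.pi * k * Real.sqrt h) :
    (∫ g, Svar κ h x 0 g ∂(stdGaussianPi d)) = 0 ∧
      ∀ i : Fin d, i ≠ 0 →
        (∫ g, Svar κ h x i g ∂(stdGaussianPi d)) ≤
          -0.08 * h * κ * Real.cos (x i / Real.sqrt h) := by
  constructor
  · have hz : ∀ g : Fin d → ℝ, Svar κ h x 0 g = 0 := aux_Svar_zero κ h x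
    simp [hz]
  · intro i hi
    have hs0 : (0:ℝ) < Real.sqrt h := Real.sqrt_pos.mpr hh0
    set a := x i / Real.sqrt h with ha
    obtain ⟨k, hk1, hk2⟩ := hx i hi
    have hcos : 0 ≤ Real.cos a := by
      have h1 : -(Real.pi/2) + 2*Real.pi*k ≤ a := by
        rw [ha, le_div_iff₀ hs0]; nlinarith
      have h2 : a ≤ Real.pi/2 + 2*Real.pi*k := by
        rw [ha, div_le_iff₀ hs0]; nlinarith
      have h3 := Real.cos_nonneg_of_mem_Icc (x := a - k*(2*Real.pi)) ⟨by linarith, by linarith⟩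
      rwa [Real.cos_sub_int_mul_two_pi] at h3
    set G : ℝ → ℝ := fun t => κ*h/3 * (Real.cos (a + Real.sqrt 2 * t) - Real.cos a
      + Real.sqrt 2/2 * t * (Real.sin a + Real.sin (a + Real.sqrt 2 * t))) with hG
    have hGc : Continuous G := by rw [hG]; fun_prop
    have hval : (∫ g, Svar κ h x i g ∂(stdGaussianPi d))
        = κ*h/3 * Real.cos a * (2 * Real.exp (-1) - 1) := by
      have hSvar : ∀ g : Fin d → ℝ, Svar κ h x i g = G (g i) := fun g =>
        aux_Svar_eq κ h hh0 x i hi g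
      calc ∫ g, Svar κ h x i g ∂(stdGaussianPi d)
          = ∫ g, G (g i) ∂(stdGaussianPi d) := by simp_rw [hSvar]
        _ = ∫ y, G y ∂(ProbabilityTheory.gaussianReal 0 1) :=
            aux_integral_eval d i G hGc.aestronglyMeasurable
        _ = (Real.sqrt (2 * Real.pi))⁻¹ * ∫ t, G t * Real.exp (-t^2/2) :=
            aux_integral_gauss G hGc.measurable
        _ = κ*h/3 * Real.cos a * (2 * Real.exp (-1) - 1) := ?_
      have hsplit : (fun t : ℝ => G t * Real.exp (-t^2/2)) = fun t : ℝ => κ*h/3 *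
          ((Real.cos (a + Real.sqrt 2 * t) * Real.exp (-t^2/2)
            - Real.cos a * Real.exp (-t^2/2)
            + Real.sqrt 2/2 * Real.sin a * (t * Real.exp (-t^2/2)))
          + Real.sqrt 2/2 * (t * Real.sin (a + Real.sqrt 2 * t) * Real.exp (-t^2/2))) :=
        funext fun t => by rw [hG]; ring
      have i1 := aux_integrable_cos a (Real.sqrt 2)
      have ie : Integrable (fun t : ℝ => Real.exp (-t^2/2)) := by
        simpa using aux_integrable_cos 0 0
      have ix : Integrable (fun t : ℝ => t * Real.exp (-t^2/2)) := by
        simpa using aux_integrable_xsin (Real.pi/2) 0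
      have i4 := aux_integrable_xsin a (Real.sqrt 2)
      have hf2 : Integrable (fun t : ℝ => Real.cos (a + Real.sqrt 2 * t) * Real.exp (-t^2/2)
          - Real.cos a * Real.exp (-t^2/2)) volume :=
        i1.sub (ie.const_mul (Real.cos a))
      have hf1 : Integrable (fun t : ℝ => Real.cos (a + Real.sqrt 2 * t) * Real.exp (-t^2/2)
          - Real.cos a * Real.exp (-t^2/2)
          + Real.sqrt 2/2 * Real.sin a * (t * Real.exp (-t^2/2))) volume :=
        hf2.add (ix.const_mul (Real.sqrt 2/2 * Real.sin a))
      rw [hsplit, MeasureTheory.integral_const_mul,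
        integral_add hf1 (i4.const_mul (Real.sqrt 2/2)),
        integral_add hf2 (ix.const_mul (Real.sqrt 2/2 * Real.sin a)),
        integral_sub i1 (ie.const_mul (Real.cos a)),
        MeasureTheory.integral_const_mul, MeasureTheory.integral_const_mul,
        MeasureTheory.integral_const_mul,
        aux_integral_cos, aux_integral_xsin, aux_integral_x, aux_integral_exp]
      have h2 : Real.sqrt 2 * Real.sqrt 2 = 2 := Real.mul_self_sqrt (by norm_num)
      have hsq : Real.sqrt 2 ^ 2 = 2 := Real.sq_sqrt (by norm_num)
      have h2pi : Real.sqrt (2 * Real.pi) ≠ 0 := by positivity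
      rw [hsq]
      have hexp : (-2 : ℝ)/2 = -1 := by norm_num
      rw [hexp]
      field_simp
      linear_combination (Real.sqrt (2 * Real.pi) * Real.cos a * Real.exp (-1)) * h2
    rw [hval]
    have hep : (0:ℝ) < Real.exp 1 := Real.exp_pos 1
    have hinv : Real.exp (-1) < 0.368 := by
      rw [Real.exp_neg]
      have he := Real.exp_one_gt_d9
      have hip : 0 < (Real.exp 1)⁻¹ := by positivity
      have hmul : Real.exp 1 * (Real.exp 1)⁻¹ = 1 := mul_inv_cancel₀ (ne_of_gt hep)
      nlinarith
    have hnn : 0 ≤ κ * h / 3 * Real.cos a := by positivity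
    nlinarith [mul_le_mul_of_nonneg_left (by nlinarith : 2 * Real.exp (-1) - 1 ≤ -0.24) hnn]

end
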